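/- For every deterministic NATS M with a single agent a and atomic proposition p, and for every state s of M, the USL sentence ψ9 := ⟨⟨x⟩⟩(a,x)□(⟨⟨x_0⟩⟩(a,x_0)∘p ∧ ⟨⟨x_0⟩⟩(a,x_0)∘¬p) is false at s (sustainable control is never realized in deterministic models). -/

import Mathlib

namespace USL

attribute [local instance] Classical.propDecidable

/-- A Non-deterministic Alternating Transition System (NATS). -/
structure NATS (Ag St At : Type) where
  v : St → Set At
  Ch : Ag → St → Set (Set St)
  Ch_nonempty : ∀ a s, (Ch a s).Nonempty
  Ch_inter : ∀ a₁ a₂ : Ag, a₁ ≠ a₂ → ∀ s : St,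
    ∀ c₁ ∈ Ch a₁ s, ∀ c₂ ∈ Ch a₂ s, (c₁ ∩ c₂).Nonempty

variable {Ag St At X : Type}

/-- A strategy, represented on tracks given as (history, current state). -/
structure NATS.Strategy (M : NATS Ag St At) where
  f : Ag → List St → St → Set St
  valid : ∀ a h s, f a h s ∈ M.Ch a s

/-- Translation σ^τ of a strategy by a track prefix τ. -/
def NATS.Strategy.shift {M : NATS Ag St At} (σ : M.Strategy) (τ : List St) : M.Strategy :=
  ⟨fun a h s => σ.f a (τ ++ h) s, fun a h s => σ.valid a (τ ++ h) s⟩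

/-- A (partial) assignment of strategies to variables. -/
def NATS.Assignment (M : NATS Ag St At) (X : Type) : Type := X → Option M.Strategy

def NATS.Assignment.shift {M : NATS Ag St At} (μ : M.Assignment X) (τ : List St) :
    M.Assignment X :=
  fun x => (μ x).map (fun σ => σ.shift τ)

/-- A commitment: a finite sequence over P(Ag) × X; the head is the most recent binding. -/
abbrev Commitment (Ag X : Type) := List (Set Ag × X)

/-- The choice induced by a single binding (A, x). -/
noncomputable def bindChoice {M : NATS Ag St At} (μ : M.Assignment X) (A : Set Ag) (x : X)
    (h : List St) (s : St) : Set St :=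
  match μ x with
  | some σ => if A.Nonempty then ⋂ a ∈ A, σ.f a h s else Set.univ
  | none => Set.univ

/-- The function from tracks to sets of states induced by a context (μ, κ);
    older bindings (towards the tail) have priority. -/
noncomputable def ctxFun {M : NATS Ag St At} (μ : M.Assignment X) :
    Commitment Ag X → List St → St → Set St
  | [] => fun _ _ => Set.univ
  | (A, x) :: κ => fun h s =>
      let r := ctxFun μ κ h s
      if (r ∩ bindChoice μ A x h s).Nonempty then r ∩ bindChoice μ A x h s else r

/-- One step of the transition relation of a NATS. -/
def NATS.Step (M : NATS Ag St At) (s s' : St) : Prop := ∀ a : Ag, ∃ c ∈ M.Ch a s, s' ∈ c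

/-- A path: an infinite sequence of states all of whose finite prefixes are tracks. -/
def NATS.IsPath (M : NATS Ag St At) (lam : ℕ → St) : Prop := ∀ n, M.Step (lam n) (lam (n + 1))

/-- The history λ_0 … λ_{n-1}. -/
def histOf (lam : ℕ → St) (n : ℕ) : List St := (List.range n).map lam

/-- The outcomes of a context (μ, κ) from a state s. -/
def outcomes (M : NATS Ag St At) (μ : M.Assignment X) (κ : Commitment Ag X) (s : St) :
    Set (ℕ → St) :=
  {lam | M.IsPath lam ∧ lam 0 = s ∧ ∀ n, lam (n + 1) ∈ ctxFun μ κ (histOf lam n) (lam n)}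

mutual
/-- USL state formulas. -/
inductive StateForm (Ag At X : Type) : Type where
  | atom (p : At)
  | snot (φ : StateForm Ag At X)
  | sand (φ₁ φ₂ : StateForm Ag At X)
  | exq (x : X) (φ : StateForm Ag At X)
  | bind (A : Set Ag) (x : X) (ψ : PathForm Ag At X)
  | unbind (A : Set Ag) (x : X) (ψ : PathForm Ag At X)
/-- USL path formulas. -/
inductive PathForm (Ag At X : Type) : Type where
  | ofState (φ : StateForm Ag At X)
  | pnot (ψ : PathForm Ag At X)
  | pand (ψ₁ ψ₂ : PathForm Ag At X)
  | puntil (ψ₁ ψ₂ : PathForm Ag At X)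
  | pnext (ψ : PathForm Ag At X)
end

/-- The commitment κ[A ↛ x]: every pair (B, x) is replaced by (B ∖ A, x). -/
noncomputable def unbindCom (A : Set Ag) (x : X) (κ : Commitment Ag X) : Commitment Ag X :=
  κ.map (fun e => if e.2 = x then (e.1 \ A, e.2) else e)

mutual
/-- USL satisfaction, state formulas. -/
def SatS (M : NATS Ag St At) (μ : M.Assignment X) (κ : Commitment Ag X) (s : St) :
    StateForm Ag At X → Prop
  | .atom p => p ∈ M.v s
  | .snot φ => ¬ SatS M μ κ s φ
  | .sand φ₁ φ₂ => SatS M μ κ s φ₁ ∧ SatS M μ κ s φ₂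
  | .exq x φ => ∃ σ : M.Strategy, SatS M (Function.update μ x (some σ)) κ s φ
  | .bind A x ψ => ∀ lam ∈ outcomes M μ ((A, x) :: κ) s, SatP M μ ((A, x) :: κ) lam ψ
  | .unbind A x ψ =>
      ∀ lam ∈ outcomes M μ (unbindCom A x κ) s, SatP M μ (unbindCom A x κ) lam ψ
/-- USL satisfaction, path formulas. -/
def SatP (M : NATS Ag St At) (μ : M.Assignment X) (κ : Commitment Ag X) (lam : ℕ → St) :
    PathForm Ag At X → Prop
  | .ofState φ => SatS M μ κ (lam 0) φ
  | .pnot ψ => ¬ SatP M μ κ lam ψ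
  | .pand ψ₁ ψ₂ => SatP M μ κ lam ψ₁ ∧ SatP M μ κ lam ψ₂
  | .puntil ψ₁ ψ₂ => ∃ i : ℕ,
      SatP M (μ.shift (histOf lam i)) κ (fun n => lam (n + i)) ψ₂ ∧
      ∀ j < i, SatP M (μ.shift (histOf lam j)) κ (fun n => lam (n + j)) ψ₁
  | .pnext ψ => SatP M (μ.shift [lam 0]) κ (fun n => lam (n + 1)) ψ
end

/-- The empty assignment. -/
def emptyAsg (M : NATS Ag St At) (X : Type) : M.Assignment X := fun _ => none

/-- Truth of a USL sentence at a state: empty assignment and empty commitment. -/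
def USLTrue (M : NATS Ag St At) (s : St) (φ : StateForm Ag At X) : Prop :=
  SatS M (emptyAsg M X) [] s φ

mutual
/-- Free variables of a state formula. -/
def freeS : StateForm Ag At X → Set X
  | .atom _ => ∅
  | .snot φ => freeS φ
  | .sand φ₁ φ₂ => freeS φ₁ ∪ freeS φ₂
  | .exq x φ => freeS φ \ {x}
  | .bind _ x ψ => freeP ψ ∪ {x}
  | .unbind _ x ψ => freeP ψ ∪ {x}
/-- Free variables of a path formula. -/
def freeP : PathForm Ag At X → Set X
  | .ofState φ => freeS φ
  | .pnot ψ => freeP ψ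
  | .pand ψ₁ ψ₂ => freeP ψ₁ ∪ freeP ψ₂
  | .puntil ψ₁ ψ₂ => freeP ψ₁ ∪ freeP ψ₂
  | .pnext ψ => freeP ψ
end

/-- A sentence: a formula with no free variable. -/
def StateForm.IsSentence (φ : StateForm Ag At X) : Prop := freeS φ = ∅

mutual
/-- SL formulas: USL formulas with no unbinder whose binders bind single agents. -/
def IsSLS : StateForm Ag At X → Prop
  | .atom _ => True
  | .snot φ => IsSLS φ
  | .sand φ₁ φ₂ => IsSLS φ₁ ∧ IsSLS φ₂
  | .exq _ φ => IsSLS φ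
  | .bind A _ ψ => (∃ a : Ag, A = {a}) ∧ IsSLP ψ
  | .unbind _ _ _ => False
def IsSLP : PathForm Ag At X → Prop
  | .ofState φ => IsSLS φ
  | .pnot ψ => IsSLP ψ
  | .pand ψ₁ ψ₂ => IsSLP ψ₁ ∧ IsSLP ψ₂
  | .puntil ψ₁ ψ₂ => IsSLP ψ₁ ∧ IsSLP ψ₂
  | .pnext ψ => IsSLP ψ
end

/-- The commitment κ* used by the generalized SL binder: every pair (A, y) is replaced
    by (A, x); if there is no such pair, (A, x) is appended as the most recent binding. -/
noncomputable def slRebind (A : Set Ag) (x : X) (κ : Commitment Ag X) : Commitment Ag X :=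
  if ∃ e ∈ κ, e.1 = A then κ.map (fun e => if e.1 = A then (A, x) else e) else (A, x) :: κ

mutual
/-- Generalized SL satisfaction over NATS, state formulas: as USL except the binder
    clause, where binding revokes the agent's previously bound strategies. -/
def SatSLS (M : NATS Ag St At) (μ : M.Assignment X) (κ : Commitment Ag X) (s : St) :
    StateForm Ag At X → Prop
  | .atom p => p ∈ M.v s
  | .snot φ => ¬ SatSLS M μ κ s φ
  | .sand φ₁ φ₂ => SatSLS M μ κ s φ₁ ∧ SatSLS M μ κ s φ₂
  | .exq x φ => ∃ σ : M.Strategy, SatSLS M (Function.update μ x (some σ)) κ s φ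
  | .bind A x ψ =>
      ∀ lam ∈ outcomes M μ (slRebind A x κ) s, SatSLP M μ (slRebind A x κ) lam ψ
  | .unbind A x ψ =>
      ∀ lam ∈ outcomes M μ (unbindCom A x κ) s, SatSLP M μ (unbindCom A x κ) lam ψ
/-- Generalized SL satisfaction over NATS, path formulas. -/
def SatSLP (M : NATS Ag St At) (μ : M.Assignment X) (κ : Commitment Ag X) (lam : ℕ → St) :
    PathForm Ag At X → Prop
  | .ofState φ => SatSLS M μ κ (lam 0) φ
  | .pnot ψ => ¬ SatSLP M μ κ lam ψ
  | .pand ψ₁ ψ₂ => SatSLP M μ κ lam ψ₁ ∧ SatSLP M μ κ lam ψ₂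
  | .puntil ψ₁ ψ₂ => ∃ i : ℕ,
      SatSLP M (μ.shift (histOf lam i)) κ (fun n => lam (n + i)) ψ₂ ∧
      ∀ j < i, SatSLP M (μ.shift (histOf lam j)) κ (fun n => lam (n + j)) ψ₁
  | .pnext ψ => SatSLP M (μ.shift [lam 0]) κ (fun n => lam (n + 1)) ψ
end

/-- Truth of an SL sentence at a state under the generalized SL semantics. -/
def SLTrue (M : NATS Ag St At) (s : St) (φ : StateForm Ag At X) : Prop :=
  SatSLS M (emptyAsg M X) [] s φ

/-- A NATS is deterministic if any selection of one choice per agent intersects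
    in a singleton. -/
def NATS.Deterministic (M : NATS Ag St At) : Prop :=
  ∀ (s : St) (c : Ag → Set St), (∀ a, c a ∈ M.Ch a s) → ∃ t : St, (⋂ a, c a) = {t}
/-- The tautology ⊤ (built from the atom p by state-level connectives). -/
def pTop (p : At) : PathForm Ag At X :=
  .ofState (.snot (.sand (.atom p) (.snot (.atom p))))

/-- □ψ abbreviates ¬(⊤ U ¬ψ). -/
def Box (p : At) (ψ : PathForm Ag At X) : PathForm Ag At X :=
  .pnot (.puntil (pTop p) (.pnot ψ))

/-- ψ9 := ⟨⟨x⟩⟩(a,x)□(⟨⟨x₀⟩⟩(a,x₀)∘p ∧ ⟨⟨x₀⟩⟩(a,x₀)∘¬p). -/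
def psi9 (a : Ag) (p : At) (x x₀ : X) : StateForm Ag At X :=
  .exq x (.bind {a} x (Box p (.pand
    (.ofState (.exq x₀ (.bind {a} x₀ (.pnext (.ofState (.atom p))))))
    (.ofState (.exq x₀ (.bind {a} x₀ (.pnext (.pnot (.ofState (.atom p))))))))))

/-- ψ7 = ψ8 := ⟨⟨x₁⟩⟩(a,x₁)□⟨⟨x₂⟩⟩(a,x₂)∘p. -/
def psi78 (a : Ag) (p : At) (x₁ x₂ : X) : StateForm Ag At X :=
  .exq x₁ (.bind {a} x₁ (Box p
    (.ofState (.exq x₂ (.bind {a} x₂ (.pnext (.ofState (.atom p))))))))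

mutual
/-- Polarity check: `pol = true` means positive polarity; every ⟨⟨x⟩⟩ must
    occur positively. -/
def ExS (pol : Bool) : StateForm Ag At X → Prop
  | .atom _ => True
  | .snot φ => ExS (!pol) φ
  | .sand φ₁ φ₂ => ExS pol φ₁ ∧ ExS pol φ₂
  | .exq _ φ => pol = true ∧ ExS pol φ
  | .bind _ _ ψ => ExP pol ψ
  | .unbind _ _ ψ => ExP pol ψ
def ExP (pol : Bool) : PathForm Ag At X → Prop
  | .ofState φ => ExS pol φ
  | .pnot ψ => ExP (!pol) ψ
  | .pand ψ₁ ψ₂ => ExP pol ψ₁ ∧ ExP pol ψ₂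
  | .puntil ψ₁ ψ₂ => ExP pol ψ₁ ∧ ExP pol ψ₂
  | .pnext ψ => ExP pol ψ
end

/-- An existential SL formula: every occurrence of ⟨⟨x⟩⟩ occurs positively. -/
def Existential (φ : StateForm Ag At X) : Prop := ExS true φ

/-- The structure M1. -/
noncomputable def M1 : NATS Unit (Fin 3) Unit where
  v := fun s => {_u : Unit | s = 1}
  Ch := fun _ s => if s = 0 then {{0}, {1}} else {{2}}
  Ch_nonempty := by
    intro a s
    try dsimp only
    split
    · exact ⟨{0}, by simp⟩
    · exact ⟨{2}, by simp⟩
  Ch_inter := by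
    intro a₁ a₂ h
    exact absurd (Subsingleton.elim a₁ a₂) h

/-- The structure M2. -/
noncomputable def M2 : NATS Unit (Fin 3) Unit where
  v := fun s => {_u : Unit | s = 1}
  Ch := fun _ s =>
    if s = 0 then {{0, 1}, {1}, {0}} else if s = 1 then {{0, 1}, {1}, {0, 2}} else {{2}}
  Ch_nonempty := by
    intro a s
    try dsimp only
    split
    · exact ⟨{0, 1}, by simp⟩
    · split
      · exact ⟨{0, 1}, by simp⟩
      · exact ⟨{2}, by simp⟩
  Ch_inter := by
    intro a₁ a₂ h
    exact absurd (Subsingleton.elim a₁ a₂) h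

/-- The binary-tree NATS T_L over {0,1}*, with p true exactly on L. -/
def treeNATS (L : Set (List Bool)) : NATS Unit (List Bool) Unit where
  v := fun w => {_u : Unit | w ∈ L}
  Ch := fun _ w => {{w ++ [false]}, {w ++ [true]}}
  Ch_nonempty := fun _ w => ⟨{w ++ [false]}, by simp⟩
  Ch_inter := by
    intro a₁ a₂ h
    exact absurd (Subsingleton.elim a₁ a₂) h
/-- First-order formulas over the signature (S₀, S₁, P, X₁, …, X_n) of binary trees,
    with n unary second-order variables; first-order variables are indexed by ℕ. -/
inductive FO (n : ℕ) : Type where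
  | eq (i j : ℕ)
  | s0 (i j : ℕ)
  | s1 (i j : ℕ)
  | pre (i : ℕ)
  | svar (k : Fin n) (i : ℕ)
  | fnot (θ : FO n)
  | fand (θ₁ θ₂ : FO n)
  | fex (i : ℕ) (θ : FO n)

/-- Satisfaction of a first-order formula in the binary tree ({0,1}*, S₀, S₁, L),
    with second-order parameters Xs and first-order valuation val. -/
noncomputable def FO.Sat {n : ℕ} (L : Set (List Bool)) (Xs : Fin n → Set (List Bool))
    (val : ℕ → List Bool) : FO n → Prop
  | .eq i j => val i = val j
  | .s0 i j => val j = val i ++ [false]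
  | .s1 i j => val j = val i ++ [true]
  | .pre i => val i ∈ L
  | .svar k i => val i ∈ Xs k
  | .fnot θ => ¬ FO.Sat L Xs val θ
  | .fand θ₁ θ₂ => FO.Sat L Xs val θ₁ ∧ FO.Sat L Xs val θ₂
  | .fex i θ => ∃ w : List Bool, FO.Sat L Xs (Function.update val i w) θ

/-- Free first-order variables of a first-order formula. -/
def FO.free {n : ℕ} : FO n → Set ℕ
  | .eq i j => {i, j}
  | .s0 i j => {i, j}
  | .s1 i j => {i, j}
  | .pre i => {i}
  | .svar _ i => {i}
  | .fnot θ => θ.free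
  | .fand θ₁ θ₂ => θ₁.free ∪ θ₂.free
  | .fex i θ => θ.free \ {i}

/-- Satisfaction of the Σ¹₁ sentence ∃X₁…∃X_n θ in the binary tree determined by L. -/
noncomputable def Sigma11Sat (L : Set (List Bool)) (n : ℕ) (θ : FO n) : Prop :=
  ∃ Xs : Fin n → Set (List Bool), FO.Sat L Xs (fun _ => []) θ

/-- unbind(A, y₁) … unbind(A, y_k) ψ for the list l = [y₁, …, y_k]. -/
def unbindSeq (A : Set Ag) (l : List X) (ψ : PathForm Ag At X) : PathForm Ag At X :=
  l.foldr (fun y ψ' => .ofState (.unbind A y ψ')) ψ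

mutual
/-- Translation of SL formulas into USL: each binder (A, x) is replaced by the
    sequence of unbinders of A from every variable in the list l, followed by (A, x). -/
def tS (l : List X) : StateForm Ag At X → StateForm Ag At X
  | .atom p => .atom p
  | .snot φ => .snot (tS l φ)
  | .sand φ₁ φ₂ => .sand (tS l φ₁) (tS l φ₂)
  | .exq x φ => .exq x (tS l φ)
  | .bind A x ψ =>
      match l with
      | [] => .bind A x (tP l ψ)
      | y :: ys => .unbind A y (unbindSeq A ys (.ofState (.bind A x (tP l ψ))))
  | .unbind A x ψ => .unbind A x (tP l ψ)
def tP (l : List X) : PathForm Ag At X → PathForm Ag At X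
  | .ofState φ => .ofState (tS l φ)
  | .pnot ψ => .pnot (tP l ψ)
  | .pand ψ₁ ψ₂ => .pand (tP l ψ₁) (tP l ψ₂)
  | .puntil ψ₁ ψ₂ => .puntil (tP l ψ₁) (tP l ψ₂)
  | .pnext ψ => .pnext (tP l ψ)
end
mutual
/-- Substitution replacing every occurrence of the subformula p by p ∧ G and every
    occurrence of ¬p by ¬p ∧ G. -/
def gsubS (G : PathForm Ag At X) : StateForm Ag At X → StateForm Ag At X
  | .atom q => .atom q
  | .snot φ => .snot (gsubS G φ)
  | .sand φ₁ φ₂ => .sand (gsubS G φ₁) (gsubS G φ₂)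
  | .exq x φ => .exq x (gsubS G φ)
  | .bind A x ψ => .bind A x (gsubP G ψ)
  | .unbind A x ψ => .unbind A x (gsubP G ψ)
def gsubP (G : PathForm Ag At X) : PathForm Ag At X → PathForm Ag At X
  | .ofState (.atom q) => .pand (.ofState (.atom q)) G
  | .pnot (.ofState (.atom q)) => .pand (.pnot (.ofState (.atom q))) G
  | .ofState φ => .ofState (gsubS G φ)
  | .pnot ψ => .pnot (gsubP G ψ)
  | .pand ψ₁ ψ₂ => .pand (gsubP G ψ₁) (gsubP G ψ₂)
  | .puntil ψ₁ ψ₂ => .puntil (gsubP G ψ₁) (gsubP G ψ₂)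
  | .pnext ψ => .pnext (gsubP G ψ)
end

/-- The guard formula □(⟨⟨v⟩⟩(a,v)∘p ∧ ⟨⟨v⟩⟩(a,v)∘¬p) over the single agent and atom. -/
def guardForm (v : ℕ) : PathForm Unit Unit ℕ :=
  Box () (.pand
    (.ofState (.exq v (.bind {()} v (.pnext (.ofState (.atom ()))))))
    (.ofState (.exq v (.bind {()} v (.pnext (.pnot (.ofState (.atom ()))))))))

/-- The family Γ_i of SL sentences (variable x is coded by 0 and x_i by i + 1). -/
def Gamma : ℕ → StateForm Unit Unit ℕ
  | 0 => psi9 () () 0 1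
  | i + 1 => gsubS (guardForm (i + 2)) (Gamma i)
/-- A concurrent game structure (labeling and transition function). -/
structure CGS (Ag St At Ac : Type) where
  v : St → Set At
  tr : St → (Ag → Ac) → St

/-- SL formulas (over CGS), as in Mogavero–Murano–Vardi. -/
inductive SLForm (Ag At X : Type) : Type where
  | atom (p : At)
  | fnot (φ : SLForm Ag At X)
  | fand (φ₁ φ₂ : SLForm Ag At X)
  | fnext (φ : SLForm Ag At X)
  | funtil (φ₁ φ₂ : SLForm Ag At X)
  | exq (x : X) (φ : SLForm Ag At X)
  | allq (x : X) (φ : SLForm Ag At X)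
  | bind (a : Ag) (x : X) (φ : SLForm Ag At X)

/-- A CGS strategy: a function from tracks (history, current state) to actions. -/
def CGSStrat (St Ac : Type) : Type := List St → St → Ac

/-- Translation of a CGS strategy by a track prefix. -/
def CGSStrat.shift (σ : CGSStrat St Ac) (τ : List St) : CGSStrat St Ac :=
  fun h s => σ (τ ++ h) s

/-- Auxiliary: (current state, history) of the unique play determined by one
    strategy per agent. -/
def playAux {Ac : Type} (G : CGS Ag St At Ac) (α : Ag → CGSStrat St Ac) (s : St) :
    ℕ → St × List St
  | 0 => (s, [])
  | n + 1 =>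
      let q := playAux G α s n
      (G.tr q.1 (fun a => α a q.2 q.1), q.2 ++ [q.1])

/-- The unique play determined by the strategies assigned to all agents. -/
def play {Ac : Type} (G : CGS Ag St At Ac) (α : Ag → CGSStrat St Ac) (s : St) (n : ℕ) : St :=
  (playAux G α s n).1

/-- SL satisfaction over a CGS, with a partial assignment χ of strategies to
    variables and a (total) assignment α of strategies to agents. -/
noncomputable def SLSatCGS {Ac : Type} (G : CGS Ag St At Ac) :
    (X → Option (CGSStrat St Ac)) → (Ag → CGSStrat St Ac) → St → SLForm Ag At X → Prop
  | _, _, s, .atom p => p ∈ G.v s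
  | χ, α, s, .fnot φ => ¬ SLSatCGS G χ α s φ
  | χ, α, s, .fand φ₁ φ₂ => SLSatCGS G χ α s φ₁ ∧ SLSatCGS G χ α s φ₂
  | χ, α, s, .exq x φ => ∃ σ : CGSStrat St Ac, SLSatCGS G (Function.update χ x (some σ)) α s φ
  | χ, α, s, .allq x φ => ∀ σ : CGSStrat St Ac, SLSatCGS G (Function.update χ x (some σ)) α s φ
  | χ, α, s, .bind a x φ => SLSatCGS G χ (Function.update α a ((χ x).getD (α a))) s φ
  | χ, α, s, .fnext φ =>
      SLSatCGS G (fun y => (χ y).map (fun σ => σ.shift [s])) (fun b => (α b).shift [s])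
        (play G α s 1) φ
  | χ, α, s, .funtil φ₁ φ₂ => ∃ i : ℕ,
      SLSatCGS G (fun y => (χ y).map (fun σ => σ.shift ((List.range i).map (play G α s))))
        (fun b => (α b).shift ((List.range i).map (play G α s))) (play G α s i) φ₂ ∧
      ∀ j < i,
        SLSatCGS G (fun y => (χ y).map (fun σ => σ.shift ((List.range j).map (play G α s))))
          (fun b => (α b).shift ((List.range j).map (play G α s))) (play G α s j) φ₁

/-- Free agents of an SL formula (temporal operators free all agents; a binder
    (a, x) binds agent a). -/
def SLForm.freeAg : SLForm Ag At X → Set Ag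
  | .atom _ => ∅
  | .fnot φ => φ.freeAg
  | .fand φ₁ φ₂ => φ₁.freeAg ∪ φ₂.freeAg
  | .fnext _ => Set.univ
  | .funtil _ _ => Set.univ
  | .exq _ φ => φ.freeAg
  | .allq _ φ => φ.freeAg
  | .bind a _ φ => φ.freeAg \ {a}

/-- Free variables of an SL formula. -/
noncomputable def SLForm.freeVr : SLForm Ag At X → Set X
  | .atom _ => ∅
  | .fnot φ => φ.freeVr
  | .fand φ₁ φ₂ => φ₁.freeVr ∪ φ₂.freeVr
  | .fnext φ => φ.freeVr
  | .funtil φ₁ φ₂ => φ₁.freeVr ∪ φ₂.freeVr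
  | .exq x φ => φ.freeVr \ {x}
  | .allq x φ => φ.freeVr \ {x}
  | .bind a x φ => if a ∈ φ.freeAg then φ.freeVr ∪ {x} else φ.freeVr

/-- An SL sentence: no free agent and no free variable. -/
def SLForm.IsSentence (φ : SLForm Ag At X) : Prop := φ.freeAg = ∅ ∧ φ.freeVr = ∅

/-- Truth of an SL sentence at a state of a CGS: with the empty assignment of
    variables (and any assignment of agents, which is irrelevant for sentences). -/
noncomputable def SLTrueCGS {Ac : Type} (G : CGS Ag St At Ac) (s : St)
    (φ : SLForm Ag At X) : Prop :=
  ∀ α : Ag → CGSStrat St Ac, SLSatCGS G (fun _ => none) α s φ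

/-!
With a single agent, determinism makes every choice a singleton, so the strategy bound first
fixes the whole outcome: later bindings are only kept when they agree with it. Hence under
`(a, x)` both witnesses of `⟨⟨x₀⟩⟩(a, x₀)∘p` and `⟨⟨x₀⟩⟩(a, x₀)∘¬p` at the initial state lead to
the same successor, which would have to satisfy both `p` and `¬p`.
-/

theorem NATS.step_of_mem_Ch [Subsingleton Ag] {M : NATS Ag St At} {a : Ag} {s t : St}
    {c : Set St} (hc : c ∈ M.Ch a s) (ht : t ∈ c) : M.Step s t :=
  fun b => Subsingleton.elim a b ▸ ⟨c, hc, ht⟩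

theorem NATS.Deterministic.exists_eq_singleton [Subsingleton Ag] {M : NATS Ag St At}
    (hdet : M.Deterministic) {a : Ag} {s : St} {c : Set St} (hc : c ∈ M.Ch a s) :
    ∃ t, c = {t} := by
  have : Nonempty Ag := ⟨a⟩
  obtain ⟨t, ht⟩ := hdet s (fun _ => c) (fun b => Subsingleton.elim a b ▸ hc)
  exact ⟨t, by rwa [Set.iInter_const] at ht⟩

theorem NATS.Assignment.shift_nil {M : NATS Ag St At} (μ : M.Assignment X) :
    μ.shift [] = μ := by
  funext y
  unfold NATS.Assignment.shift
  cases μ y <;> rfl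

theorem SatP.of_box {M : NATS Ag St At} {μ : M.Assignment X} {κ : Commitment Ag X}
    {lam : ℕ → St} {p : At} {ψ : PathForm Ag At X} (h : SatP M μ κ lam (Box p ψ)) :
    SatP M μ κ lam ψ := by
  by_contra hψ
  simp only [Box, SatP] at h
  exact h ⟨0, by simpa [histOf, NATS.Assignment.shift_nil] using hψ, by simp⟩

section ctxFun

variable {M : NATS Ag St At} (μ : M.Assignment X) (κ : Commitment Ag X) (h : List St) (s : St)

theorem ctxFun_cons_subset (A : Set Ag) (y : X) :
    ctxFun μ ((A, y) :: κ) h s ⊆ ctxFun μ κ h s := by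
  simp only [ctxFun]
  split_ifs
  exacts [Set.inter_subset_left, subset_rfl]

theorem ctxFun_cons_nonempty (A : Set Ag) (y : X) (hne : (ctxFun μ κ h s).Nonempty) :
    (ctxFun μ ((A, y) :: κ) h s).Nonempty := by
  simp only [ctxFun]
  split_ifs with hinter
  exacts [hinter, hne]

theorem ctxFun_cons_of_eq_singleton (A : Set Ag) (y : X) {t : St}
    (ht : ctxFun μ κ h s = {t}) : ctxFun μ ((A, y) :: κ) h s = {t} :=
  (Set.Nonempty.subset_singleton_iff (ctxFun_cons_nonempty μ κ h s A y (ht ▸ ⟨t, rfl⟩))).1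
    (ht ▸ ctxFun_cons_subset μ κ h s A y)

theorem ctxFun_singleton_bind {x : X} {σ : M.Strategy} (hμ : μ x = some σ) (a : Ag)
    (hne : (σ.f a h s).Nonempty) : ctxFun μ [({a}, x)] h s = σ.f a h s := by
  have hchoice : bindChoice μ {a} x h s = σ.f a h s := by simp [bindChoice, hμ]
  simp only [ctxFun, hchoice, Set.univ_inter, if_pos hne]

end ctxFun

theorem exists_seq_histOf (next : List St → St → St) (s : St) :
    ∃ lam : ℕ → St, lam 0 = s ∧ ∀ n, lam (n + 1) = next (histOf lam n) (lam n) := by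
  let run : ℕ → St × List St := fun n =>
    Nat.rec (s, []) (fun _ q => (next q.2 q.1, q.2 ++ [q.1])) n
  have hrun : ∀ n, (run n).2 = histOf (fun k => (run k).1) n := by
    intro n
    induction n with
    | zero => rfl
    | succ n ih =>
      simp only [histOf, List.range_succ, List.map_append, List.map_cons, List.map_nil] at ih ⊢
      rw [← ih]
  exact ⟨fun n => (run n).1, rfl, fun n => by rw [← hrun]⟩

theorem outcomes_nonempty {M : NATS Ag St At} {μ : M.Assignment X} {κ : Commitment Ag X}
    (hne : ∀ h s, (ctxFun μ κ h s).Nonempty)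
    (hstep : ∀ h s, ∀ t ∈ ctxFun μ κ h s, M.Step s t) (s : St) :
    (outcomes M μ κ s).Nonempty := by
  choose next hnext using hne
  obtain ⟨lam, hzero, hsucc⟩ := exists_seq_histOf next s
  have hmem : ∀ n, lam (n + 1) ∈ ctxFun μ κ (histOf lam n) (lam n) :=
    fun n => hsucc n ▸ hnext _ _
  exact ⟨lam, fun n => hstep _ _ _ (hmem n), hzero, hmem⟩

section SingleAgentDeterministic

variable [Subsingleton Ag] {M : NATS Ag St At} {x : X} {σ : M.Strategy}

theorem ctxFun_append_bind_of_deterministic (hdet : M.Deterministic) {μ : M.Assignment X}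
    (hμ : μ x = some σ) {a : Ag} (κ : Commitment Ag X) (h : List St) (s : St) :
    ctxFun μ (κ ++ [({a}, x)]) h s = σ.f a h s := by
  obtain ⟨t, ht⟩ := hdet.exists_eq_singleton (σ.valid a h s)
  rw [ht]
  induction κ with
  | nil => exact ht ▸ ctxFun_singleton_bind μ h s hμ a (ht ▸ ⟨t, rfl⟩)
  | cons e κ ih => exact ctxFun_cons_of_eq_singleton μ _ h s e.1 e.2 ih

theorem outcomes_append_bind_nonempty (hdet : M.Deterministic) {μ : M.Assignment X}
    (hμ : μ x = some σ) (a : Ag) (κ : Commitment Ag X) (s : St) :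
    (outcomes M μ (κ ++ [({a}, x)]) s).Nonempty := by
  have hctx := ctxFun_append_bind_of_deterministic hdet (a := a) hμ κ
  refine outcomes_nonempty (fun h s => ?_) (fun h s t ht => ?_) s
  · obtain ⟨t, ht⟩ := hdet.exists_eq_singleton (σ.valid a h s)
    rw [hctx, ht]
    exact ⟨t, rfl⟩
  · rw [hctx] at ht
    exact NATS.step_of_mem_Ch (σ.valid a h s) ht

theorem eq_of_mem_outcomes_append_bind (hdet : M.Deterministic) {μ μ' : M.Assignment X}
    (hμ : μ x = some σ) (hμ' : μ' x = some σ) {a : Ag} {κ κ' : Commitment Ag X} {s : St}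
    {lam lam' : ℕ → St}
    (hlam : lam ∈ outcomes M μ (κ ++ [({a}, x)]) s)
    (hlam' : lam' ∈ outcomes M μ' (κ' ++ [({a}, x)]) s) : lam = lam' := by
  have hagree : ∀ n, ∀ k ≤ n, lam k = lam' k := by
    intro n
    induction n with
    | zero =>
      intro k hk
      rw [Nat.le_zero.1 hk, hlam.2.1, hlam'.2.1]
    | succ n ih =>
      intro k hk
      rcases Nat.lt_or_eq_of_le hk with hk | rfl
      · exact ih k (Nat.lt_succ_iff.1 hk)
      have hhist : histOf lam n = histOf lam' n :=
        List.map_congr_left fun k hk => ih k (List.mem_range.1 hk).le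
      have hstep := hlam.2.2 n
      have hstep' := hlam'.2.2 n
      rw [ctxFun_append_bind_of_deterministic hdet hμ] at hstep
      rw [ctxFun_append_bind_of_deterministic hdet hμ', ← hhist, ← ih n le_rfl] at hstep'
      obtain ⟨t, ht⟩ := hdet.exists_eq_singleton (σ.valid a (histOf lam n) (lam n))
      rw [ht] at hstep hstep'
      exact hstep.trans hstep'.symm
  exact funext fun n => hagree n n le_rfl

end SingleAgentDeterministic

/-- in every deterministic NATS with a single agent a and atomic
proposition p, the USL sentence ψ9 is false at every state. -/
theorem no_sustainable_control_deterministic (Ag St At X : Type) (a : Ag)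
    (ha : ∀ b : Ag, b = a) (p : At) (x x₀ : X) (hx : x ≠ x₀)
    (M : NATS Ag St At) (hdet : M.Deterministic) (s : St) :
    ¬ USLTrue M s (psi9 a p x x₀) := by
  have : Subsingleton Ag := ⟨fun b c => (ha b).trans (ha c).symm⟩
  rintro ⟨σ, hbind⟩
  set μ := Function.update (emptyAsg M X) x (some σ)
  have hμ : μ x = some σ := Function.update_self ..
  obtain ⟨lam, hlam⟩ := outcomes_append_bind_nonempty hdet hμ a [] s
  have hnow := (hbind lam hlam).of_box
  simp only [SatP, SatS, hlam.2.1] at hnow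
  obtain ⟨⟨σp, hp⟩, ⟨σn, hn⟩⟩ := hnow
  have hμ₀ (τ : M.Strategy) : Function.update μ x₀ (some τ) x = some σ :=
    (Function.update_of_ne hx _ _).trans hμ
  obtain ⟨lp, hlp⟩ := outcomes_append_bind_nonempty hdet (hμ₀ σp) a [({a}, x₀)] s
  obtain ⟨ln, hln⟩ := outcomes_append_bind_nonempty hdet (hμ₀ σn) a [({a}, x₀)] s
  have hsame : lp = ln := eq_of_mem_outcomes_append_bind hdet (hμ₀ σp) (hμ₀ σn) hlp hln
  exact hn ln hln (hsame ▸ hp lp hlp)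

end USL
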